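/- arXiv:1105.2541 — 3 statements merged into one kernel-verified Lean document; each statement's English description precedes it below -/
import Mathlib

section
/- Among all trees on N ≥ 4 vertices with diameter 3, the Wiener index is strictly increasing along the sequence D_{N,1,N-3}, D_{N,2,N-4}, ..., D_{N,⌊(N-2)/2⌋,⌈(N-2)/2⌉}: that is, W(D_{N,p,q}) < W(D_{N,p',q'}) whenever p < p', p + q = p' + q' = N - 2, and p ≤ q, p' ≤ q'. -/
/-- The Wiener index of a finite graph: the sum of pairwise distances
(each unordered pair counted once). -/
noncomputable def wiener {V : Type*} [Fintype V] (G : SimpleGraph V) : ℕ :=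
  (∑ i : V, ∑ j : V, G.dist i j) / 2

/-- The double palm tree `D_{N,p,q}`: a path on `N - p - q` vertices with `p` extra
leaves attached to one endpoint and `q` extra leaves attached to the other.
Vertices `0,…,p-1` are the leaves at one end (attached to vertex `p`), vertices
`p,…,N-q-1` form the path, and vertices `N-q,…,N-1` are leaves attached to `N-q-1`. -/
def doublePalm (N p q : ℕ) : SimpleGraph (Fin N) :=
  SimpleGraph.fromRel (fun i j =>
    ((i : ℕ) < p ∧ (j : ℕ) = p) ∨
    (p ≤ (i : ℕ) ∧ (i : ℕ) + 1 = (j : ℕ) ∧ (j : ℕ) ≤ N - q - 1) ∨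
    ((i : ℕ) = N - q - 1 ∧ N - q ≤ (j : ℕ)))

/-! Between distinct vertices of `D_{N,p,q}` the distance is the number of leaves among them, plus
one if they lie on different sides of the central edge. Summing over all pairs gives
`W(D_{N,p,q}) = (N - 1) ^ 2 + p q`, and for a fixed sum `p + q` the product `p q` increases as
`p` and `q` become more balanced. -/

namespace SimpleGraph

variable {V : Type*} {G : SimpleGraph V} {d : V → V → ℕ}

theorem le_length_of_forall_adj (hd : ∀ u v w, G.Adj u w → d u v ≤ d w v + 1)
    (hdiag : ∀ v, d v v = 0) {u v : V} (p : G.Walk u v) : d u v ≤ p.length := by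
  induction p with
  | nil => simp [hdiag]
  | cons h p ih => exact (hd _ _ _ h).trans (by rw [Walk.length_cons]; omega)

theorem exists_walk_length_eq_of_forall_ne (hdiag : ∀ v, d v v = 0)
    (hstep : ∀ u v, u ≠ v → ∃ w, G.Adj u w ∧ d w v + 1 = d u v) (u v : V) :
    ∃ p : G.Walk u v, p.length = d u v := by
  induction hn : d u v generalizing u with
  | zero =>
    by_cases huv : u = v
    · subst huv; exact ⟨.nil, rfl⟩
    · obtain ⟨w, -, hw⟩ := hstep u v huv; omega
  | succ n ih =>
    have huv : u ≠ v := by rintro rfl; simp [hdiag] at hn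
    obtain ⟨w, hadj, hw⟩ := hstep u v huv
    obtain ⟨p, hp⟩ := ih w (by omega)
    exact ⟨.cons hadj p, by rw [Walk.length_cons, hp]⟩

theorem dist_eq_of_forall_adj (hd : ∀ u v w, G.Adj u w → d u v ≤ d w v + 1)
    (hdiag : ∀ v, d v v = 0) (hstep : ∀ u v, u ≠ v → ∃ w, G.Adj u w ∧ d w v + 1 = d u v)
    (u v : V) : G.dist u v = d u v := by
  obtain ⟨p, hp⟩ := exists_walk_length_eq_of_forall_ne hdiag hstep u v
  obtain ⟨p', hp'⟩ := p.reachable.exists_walk_length_eq_dist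
  exact le_antisymm (hp ▸ dist_le p) (hp' ▸ le_length_of_forall_adj hd hdiag p')

end SimpleGraph

open Finset

namespace Finset

variable {n m : ℕ}

theorem card_range_filter_le (h : m < n) : #{a ∈ range n | a ≤ m} = m + 1 := by
  rw [show {a ∈ range n | a ≤ m} = range (m + 1) by ext; simp; omega, card_range]

theorem card_range_filter_gt : #{a ∈ range n | m < a} = n - (m + 1) := by
  rw [show {a ∈ range n | m < a} = Ico (m + 1) n by ext; simp; omega, Nat.card_Ico]

end Finset

theorem Nat.mul_lt_mul_of_add_eq_of_lt_of_le {a b c d : ℕ} (hsum : a + b = c + d) (hac : a < c)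
    (hcd : c ≤ d) : a * b < c * d := by
  nlinarith

section DoublePalm

variable {p q : ℕ}

lemma doublePalm_adj_iff {i j : Fin (p + q + 2)} :
    (doublePalm (p + q + 2) p q).Adj i j ↔
      ((i : ℕ) < p ∧ (j : ℕ) = p) ∨ ((j : ℕ) < p ∧ (i : ℕ) = p) ∨
      ((i : ℕ) = p ∧ (j : ℕ) = p + 1) ∨ ((j : ℕ) = p ∧ (i : ℕ) = p + 1) ∨
      ((i : ℕ) = p + 1 ∧ p + 2 ≤ (j : ℕ)) ∨ ((j : ℕ) = p + 1 ∧ p + 2 ≤ (i : ℕ)) := by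
  rw [doublePalm, SimpleGraph.fromRel_adj, ne_eq, ← Fin.val_eq_val]
  omega

/-- In `doublePalm (p + q + 2) p q` the centres are `p` and `p + 1`, and `a ≤ p` says that `a`
lies on the side of `p`. -/
def palmDepth (p a : ℕ) : ℕ := if a = p ∨ a = p + 1 then 0 else 1

def palmCross (p a b : ℕ) : ℕ := if (a ≤ p ↔ b ≤ p) then 0 else 1

def palmDist (p a b : ℕ) : ℕ :=
  if a = b then 0 else palmDepth p a + palmDepth p b + palmCross p a b

lemma doublePalm_dist (i j : Fin (p + q + 2)) :
    (doublePalm (p + q + 2) p q).dist i j = palmDist p i j := by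
  refine SimpleGraph.dist_eq_of_forall_adj (d := fun i j : Fin (p + q + 2) => palmDist p i j)
    ?_ (by simp [palmDist]) ?_ i j
  · intro i j k h
    rw [doublePalm_adj_iff] at h
    simp only [palmDist, palmDepth, palmCross]
    split_ifs <;> omega
  · intro i j hij
    rw [← Fin.val_ne_iff] at hij
    let centre (a : ℕ) : Fin (p + q + 2) :=
      ⟨if a ≤ p then p else p + 1, by split_ifs <;> omega⟩
    have hcentre (a : ℕ) : (centre a : ℕ) = if a ≤ p then p else p + 1 := rfl
    by_cases hi : (i : ℕ) = p ∨ (i : ℕ) = p + 1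
    · by_cases hside : ((i : ℕ) ≤ p ↔ (j : ℕ) ≤ p)
      · refine ⟨j, ?_, ?_⟩
        · rw [doublePalm_adj_iff]; omega
        · simp only [palmDist, palmDepth, palmCross]; split_ifs <;> omega
      · refine ⟨centre j, ?_, ?_⟩
        · rw [doublePalm_adj_iff, hcentre]; split_ifs <;> omega
        · simp only [palmDist, palmDepth, palmCross, hcentre]; split_ifs <;> omega
    · refine ⟨centre i, ?_, ?_⟩
      · rw [doublePalm_adj_iff, hcentre]; split_ifs <;> omega
      · simp only [palmDist, palmDepth, palmCross, hcentre]; split_ifs <;> omega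

lemma sum_palmDepth : ∑ a ∈ range (p + q + 2), palmDepth p a = p + q := by
  have h (a : ℕ) :
      palmDepth p a + ((if a = p then 1 else 0) + (if a = p + 1 then 1 else 0)) = 1 := by
    unfold palmDepth; split_ifs <;> omega
  have hsum := sum_congr rfl fun a (_ : a ∈ range (p + q + 2)) => h a
  rw [sum_add_distrib, sum_add_distrib, sum_ite_eq', sum_ite_eq',
    if_pos (mem_range.2 (by omega)), if_pos (mem_range.2 (by omega)), sum_const, card_range,
    smul_eq_mul, mul_one] at hsum
  omega

lemma sum_sum_palmCross :
    ∑ a ∈ range (p + q + 2), ∑ b ∈ range (p + q + 2), palmCross p a b =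
      2 * (p + 1) * (q + 1) := by
  have h (a b : ℕ) : palmCross p a b =
      (if a ≤ p then 1 else 0) * (if p < b then 1 else 0) +
        (if p < a then 1 else 0) * (if b ≤ p then 1 else 0) := by
    unfold palmCross; split_ifs <;> omega
  simp only [h, sum_add_distrib, ← sum_mul_sum, sum_boole, Nat.cast_id,
    card_range_filter_le (by omega : p < p + q + 2), card_range_filter_gt]
  rw [show p + q + 2 - (p + 1) = q + 1 by omega]
  ring

lemma sum_sum_palmDist :
    ∑ a ∈ range (p + q + 2), ∑ b ∈ range (p + q + 2), palmDist p a b =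
      2 * ((p + q + 1) ^ 2 + p * q) := by
  have h (a b : ℕ) : palmDist p a b + (if a = b then 2 * palmDepth p a else 0) =
      palmDepth p a + palmDepth p b + palmCross p a b := by
    unfold palmDist palmDepth palmCross; split_ifs <;> omega
  have hsum :
      ∑ a ∈ range (p + q + 2), ∑ b ∈ range (p + q + 2), palmDist p a b + 2 * (p + q) =
      2 * (p + q + 2) * (p + q) + 2 * (p + 1) * (q + 1) := by
    calc _ = ∑ a ∈ range (p + q + 2), ∑ b ∈ range (p + q + 2),
          (palmDist p a b + if a = b then 2 * palmDepth p a else 0) := by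
          simp only [sum_add_distrib, sum_ite_eq, mem_range]
          rw [sum_ite_of_true fun a ha => mem_range.1 ha, ← mul_sum, sum_palmDepth]
      _ = ∑ a ∈ range (p + q + 2), ∑ b ∈ range (p + q + 2),
          (palmDepth p a + palmDepth p b + palmCross p a b) := by simp only [h]
      _ = _ := by
          simp only [sum_add_distrib, sum_const, card_range, smul_eq_mul, ← mul_sum,
            sum_palmDepth, sum_sum_palmCross]
          ring
  have hring : 2 * (p + q + 2) * (p + q) + 2 * (p + 1) * (q + 1) =
      2 * ((p + q + 1) ^ 2 + p * q) + 2 * (p + q) := by ring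
  omega

lemma wiener_doublePalm {N : ℕ} (h : p + q + 2 = N) :
    wiener (doublePalm N p q) = (N - 1) ^ 2 + p * q := by
  subst h
  rw [wiener]
  simp only [doublePalm_dist, Fin.sum_univ_eq_sum_range (palmDist p _)]
  rw [Fin.sum_univ_eq_sum_range (fun a => ∑ b ∈ range (p + q + 2), palmDist p a b),
    sum_sum_palmDist, Nat.mul_div_cancel_left _ two_pos]
  rfl

end DoublePalm

theorem stmt8_general {N p q p' q' : ℕ} (hpp' : p < p')
    (hpq : p + q = N - 2) (hp'q' : p' + q' = N - 2) (h3 : p' ≤ q') :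
    wiener (doublePalm N p q) < wiener (doublePalm N p' q') := by
  rw [wiener_doublePalm (by omega : p + q + 2 = N),
    wiener_doublePalm (by omega : p' + q' + 2 = N)]
  exact Nat.add_lt_add_left (Nat.mul_lt_mul_of_add_eq_of_lt_of_le (by omega) hpp' h3) _

theorem stmt8 {N p q p' q' : ℕ} (hN : 4 ≤ N) (h1 : 1 ≤ p) (hpp' : p < p')
    (hpq : p + q = N - 2) (hp'q' : p' + q' = N - 2) (h2 : p ≤ q) (h3 : p' ≤ q') :
    wiener (doublePalm N p q) < wiener (doublePalm N p' q') :=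
  stmt8_general hpp' hpq hp'q' h3
end

section
/- Let T be a rooted tree with root r and more than one vertex, and for nonnegative integers l, k let T^r_{l,k} be the tree formed by attaching two disjoint paths with l and k vertices respectively to r (each by an edge from r to one end of the path). If 1 ≤ l ≤ k, then W(T^r_{l-1,k+1}) - W(T^r_{l,k}) = (N - l - k - 1)(k - l + 1) > 0, where N is the total number of vertices and W is the Wiener index. -/
/-- The vine `T^r_{l,k}`: the tree obtained from a rooted tree `T` (root `r`) by
attaching two disjoint paths, with `l` and `k` vertices respectively, to the root. -/
def vine {V : Type*} (T : SimpleGraph V) (r : V) (l k : ℕ) :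
    SimpleGraph (V ⊕ (Fin l ⊕ Fin k)) :=
  SimpleGraph.fromRel (fun a b =>
    match a, b with
    | Sum.inl u, Sum.inl v => T.Adj u v
    | Sum.inl u, Sum.inr (Sum.inl i) => u = r ∧ (i : ℕ) = 0
    | Sum.inl u, Sum.inr (Sum.inr i) => u = r ∧ (i : ℕ) = 0
    | Sum.inr (Sum.inl i), Sum.inr (Sum.inl j) => (i : ℕ) + 1 = (j : ℕ)
    | Sum.inr (Sum.inr i), Sum.inr (Sum.inr j) => (i : ℕ) + 1 = (j : ℕ)
    | _, _ => False)

namespace SimpleGraph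

variable {V : Type*} {G : SimpleGraph V} {a b : V}

lemma Reachable.exists_adj_dist_lt (h : G.Reachable a b) (hne : a ≠ b) :
    ∃ c, G.Adj a c ∧ G.dist c b < G.dist a b := by
  obtain ⟨p, hp⟩ := h.exists_walk_length_eq_dist
  cases p with
  | nil => exact absurd rfl hne
  | cons hac q => exact ⟨_, hac, by grind [dist_le q, Walk.length_cons]⟩

lemma le_add_length_of_lipschitz (f : V → ℕ) (hf : ∀ b c, G.Adj b c → f c ≤ f b + 1)
    (p : G.Walk a b) : f b ≤ f a + p.length := by
  induction p with
  | nil => simp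
  | cons h _ ih => grind [hf _ _ h, Walk.length_cons]

lemma dist_eq_of_lipschitz_of_descent (f : V → ℕ) (ha : f a = 0)
    (hf : ∀ b c, G.Adj b c → f c ≤ f b + 1)
    (hdesc : ∀ b, b ≠ a → ∃ c, G.Adj b c ∧ f c < f b) (b : V) : G.dist a b = f b := by
  have walk_le : ∀ n b, f b = n → ∃ p : G.Walk a b, p.length ≤ f b := by
    intro n
    induction n using Nat.strong_induction_on with
    | _ n ih =>
      intro b hb
      by_cases hba : b = a
      · subst hba; exact ⟨.nil, by simp⟩
      obtain ⟨c, hbc, hc⟩ := hdesc b hba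
      obtain ⟨p, hp⟩ := ih (f c) (hb ▸ hc) c rfl
      exact ⟨p.concat hbc.symm, by grind [Walk.length_concat]⟩
  obtain ⟨p, hp⟩ := walk_le _ b rfl
  obtain ⟨q, hq⟩ := p.reachable.exists_walk_length_eq_dist
  have := le_add_length_of_lipschitz f hf q
  have := dist_le p
  omega

end SimpleGraph

namespace Vine

open SimpleGraph

variable {V : Type*} {T : SimpleGraph V} {r : V} {l k : ℕ}

variable (T r l k) in
noncomputable def vineDist : V ⊕ (Fin l ⊕ Fin k) → V ⊕ (Fin l ⊕ Fin k) → ℕ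
  | .inl u, .inl v => T.dist u v
  | .inl u, .inr (.inl i) | .inl u, .inr (.inr i)
  | .inr (.inl i), .inl u | .inr (.inr i), .inl u => T.dist u r + i + 1
  | .inr (.inl i), .inr (.inl j) | .inr (.inr i), .inr (.inr j) => (i - j) + (j - i)
  | .inr (.inl i), .inr (.inr j) | .inr (.inr i), .inr (.inl j) => i + j + 2

lemma vineDist_self (a) : vineDist T r l k a a = 0 := by
  rcases a with u | i | i <;> simp [vineDist]

lemma vineDist_le_vineDist_add_one {b c} (h : (vine T r l k).Adj b c) (a) :
    vineDist T r l k a c ≤ vineDist T r l k a b + 1 := by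
  have dist_le_of_adj : ∀ {u v w : V}, T.Adj v w → T.dist u w ≤ T.dist u v + 1 := by
    intro u v w h
    rcases h.diff_dist_adj (u := u) with h | h | h <;> omega
  have dist_root_le : ∀ {v w : V}, T.Adj v w → T.dist w r ≤ T.dist v r + 1 := fun h => by
    simpa only [SimpleGraph.dist_comm] using dist_le_of_adj (u := r) h
  rcases a with u | i | i <;> rcases b with v | j | j <;> rcases c with w | m | m <;>
    simp [vine] at h <;> simp only [vineDist] <;> grind [Adj.symm]

lemma exists_adj_vineDist_lt (hT : T.Connected) {a b} (hne : b ≠ a) :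
    ∃ c, (vine T r l k).Adj b c ∧ vineDist T r l k a c < vineDist T r l k a b := by
  have toward : ∀ {u v}, v ≠ u →
      ∃ w, (vine T r l k).Adj (.inl v) (.inl w) ∧ T.dist w u < T.dist v u := by
    intro u v h
    obtain ⟨w, hvw, hw⟩ := (hT v u).exists_adj_dist_lt h
    exact ⟨w, by simpa [vine] using ⟨hvw.ne, Or.inl hvw⟩, hw⟩
  rcases a with u | i | i <;> rcases b with v | j | j
  · obtain ⟨w, hvw, hw⟩ := toward (u := u) (v := v) (by simpa using hne)
    exact ⟨.inl w, hvw, by simpa [vineDist, SimpleGraph.dist_comm (u := u)] using hw⟩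
  · by_cases hj : (j : ℕ) = 0
    · exact ⟨.inl r, by simp [vine, hj], by simp [vineDist]⟩
    · exact ⟨.inr (.inl ⟨j - 1, by omega⟩),
        by simp [vine, Fin.ext_iff]; omega, by simp [vineDist]; omega⟩
  · by_cases hj : (j : ℕ) = 0
    · exact ⟨.inl r, by simp [vine, hj], by simp [vineDist]⟩
    · exact ⟨.inr (.inr ⟨j - 1, by omega⟩),
        by simp [vine, Fin.ext_iff]; omega, by simp [vineDist]; omega⟩
  · by_cases hv : v = r
    · subst hv
      exact ⟨.inr (.inl ⟨0, i.pos⟩), by simp [vine], by simp [vineDist]⟩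
    · obtain ⟨w, hvw, hw⟩ := toward hv
      exact ⟨.inl w, hvw, by simpa [vineDist] using hw⟩
  · obtain hji | hji := lt_or_gt_of_ne (Fin.val_ne_of_ne (by simpa using hne) : (j : ℕ) ≠ i)
    · exact ⟨.inr (.inl ⟨j + 1, by omega⟩),
        by simp [vine, Fin.ext_iff], by simp [vineDist]; omega⟩
    · exact ⟨.inr (.inl ⟨j - 1, by omega⟩),
        by simp [vine, Fin.ext_iff]; omega, by simp [vineDist]; omega⟩
  · by_cases hj : (j : ℕ) = 0
    · exact ⟨.inl r, by simp [vine, hj], by simp [vineDist]⟩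
    · exact ⟨.inr (.inr ⟨j - 1, by omega⟩),
        by simp [vine, Fin.ext_iff]; omega, by simp [vineDist]; omega⟩
  · by_cases hv : v = r
    · subst hv
      exact ⟨.inr (.inr ⟨0, i.pos⟩), by simp [vine], by simp [vineDist]⟩
    · obtain ⟨w, hvw, hw⟩ := toward hv
      exact ⟨.inl w, hvw, by simpa [vineDist] using hw⟩
  · by_cases hj : (j : ℕ) = 0
    · exact ⟨.inl r, by simp [vine, hj], by simp [vineDist]⟩
    · exact ⟨.inr (.inl ⟨j - 1, by omega⟩),
        by simp [vine, Fin.ext_iff]; omega, by simp [vineDist]; omega⟩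
  · obtain hji | hji := lt_or_gt_of_ne (Fin.val_ne_of_ne (by simpa using hne) : (j : ℕ) ≠ i)
    · exact ⟨.inr (.inr ⟨j + 1, by omega⟩),
        by simp [vine, Fin.ext_iff], by simp [vineDist]; omega⟩
    · exact ⟨.inr (.inr ⟨j - 1, by omega⟩),
        by simp [vine, Fin.ext_iff]; omega, by simp [vineDist]; omega⟩

lemma dist_vine (hT : T.Connected) (a b) : (vine T r l k).dist a b = vineDist T r l k a b :=
  dist_eq_of_lipschitz_of_descent _ (vineDist_self a)
    (fun _ _ h => vineDist_le_vineDist_add_one h a) (fun _ hb => exists_adj_vineDist_lt hT hb) b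

def armSum (m : ℕ) : ℕ := ∑ i : Fin m, ((i : ℕ) + 1)

def armPairSum (m : ℕ) : ℕ := ∑ i : Fin m, ∑ j : Fin m, ((i - j : ℕ) + (j - i))

lemma armSum_succ (m : ℕ) : armSum (m + 1) = armSum m + (m + 1) := by
  simp [armSum, Fin.sum_univ_castSucc]

lemma sum_sub_eq_armSum (m : ℕ) : ∑ i : Fin m, (m - i : ℕ) = armSum m := by
  rw [armSum, ← Equiv.sum_comp Fin.revPerm]
  exact Finset.sum_congr rfl fun i _ => by simp [Fin.val_rev]; omega

lemma armPairSum_succ (m : ℕ) : armPairSum (m + 1) = armPairSum m + 2 * armSum m := by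
  have hsub : ∀ i : Fin m, (i - m : ℕ) = 0 := fun i => by omega
  simp only [armPairSum, Fin.sum_univ_castSucc, Fin.val_castSucc, Fin.val_last,
    Finset.sum_add_distrib, hsub, Nat.sub_self, Finset.sum_const_zero, sum_sub_eq_armSum]
  ring

lemma sum_vineDist [Fintype V] :
    ∑ a, ∑ b, vineDist T r l k a b =
      ∑ u, ∑ v, T.dist u v + 2 * ((l + k) * ∑ u, T.dist u r)
        + 2 * Fintype.card V * (armSum l + armSum k) + armPairSum l + armPairSum k
        + 2 * (k * armSum l + l * armSum k) := by
  simp only [Fintype.sum_sum_type, vineDist, armSum, armPairSum, Finset.sum_add_distrib,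
    Finset.sum_const, Finset.card_univ, Fintype.card_fin, smul_eq_mul, ← Finset.mul_sum, mul_one]
  ring

lemma sum_dist_vine_add_eq [Fintype V] (hT : T.Connected) :
    ∑ a, ∑ b, (vine T r l (k + 1)).dist a b + 2 * Fintype.card V * l + 2 * k =
      ∑ a, ∑ b, (vine T r (l + 1) k).dist a b + 2 * Fintype.card V * k + 2 * l := by
  simp only [dist_vine hT, sum_vineDist, armSum_succ, armPairSum_succ]
  ring

end Vine

theorem stmt9 {V : Type*} [Fintype V] (T : SimpleGraph V) (hT : T.IsTree)
    (hV : 1 < Fintype.card V) (r : V) (l k : ℕ) (hl : 1 ≤ l) (hlk : l ≤ k) :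
    wiener (vine T r (l - 1) (k + 1)) =
      wiener (vine T r l k)
        + (Fintype.card V + l + k - l - k - 1) * (k - l + 1) ∧
    0 < (Fintype.card V + l + k - l - k - 1) * (k - l + 1) := by
  obtain ⟨l, rfl⟩ : ∃ l', l = l' + 1 := ⟨l - 1, by omega⟩
  obtain ⟨n, hn⟩ : ∃ n, Fintype.card V = n + 1 := ⟨Fintype.card V - 1, by omega⟩
  obtain ⟨d, rfl⟩ : ∃ d, k = l + 1 + d := ⟨k - (l + 1), by omega⟩
  have hshift :=
    Vine.sum_dist_vine_add_eq (T := T) (r := r) (l := l) (k := l + 1 + d) hT.connected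
  have hcoeff : n + 1 + (l + 1) + (l + 1 + d) - (l + 1) - (l + 1 + d) - 1 = n := by omega
  have hlen : l + 1 + d - (l + 1) + 1 = d + 1 := by omega
  rw [Nat.add_sub_cancel, hn, hcoeff, hlen]
  refine ⟨?_, Nat.mul_pos (by omega) (by omega)⟩
  have hsum : ∑ a, ∑ b, (vine T r l (l + 1 + d + 1)).dist a b =
      ∑ a, ∑ b, (vine T r (l + 1) (l + 1 + d)).dist a b + 2 * (n * (d + 1)) := by
    rw [hn] at hshift
    linarith
  simp only [wiener, hsum]
  omega
end

section
/- Among all trees on N vertices (N ≥ 2) with unit edge weights, the path P_N has the strictly largest Wiener index: for every tree T on N vertices with T not a path, W(T) < W(P_N). -/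
open Finset

theorem Finset.sum_eq_sum_range_card_filter_lt {ι : Type*} (s : Finset ι) (f : ι → ℕ)
    {M : ℕ} (hf : ∀ i ∈ s, f i ≤ M) :
    ∑ i ∈ s, f i = ∑ k ∈ range M, #{i ∈ s | k < f i} := by
  calc ∑ i ∈ s, f i = ∑ i ∈ s, ∑ k ∈ range M, if k < f i then 1 else 0 := by
        refine sum_congr rfl fun i hi => ?_
        have hrange : {k ∈ range M | k < f i} = range (f i) := by
          ext k
          simp only [mem_filter, mem_range]
          have := hf i hi
          omega
        rw [sum_boole, Nat.cast_id, hrange, card_range]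
    _ = ∑ k ∈ range M, #{i ∈ s | k < f i} := by
        rw [sum_comm]
        simp only [sum_boole, Nat.cast_id]

theorem Finset.sum_range_sub_succ_eq_choose_two (n : ℕ) :
    ∑ k ∈ range n, (n - (k + 1)) = n.choose 2 := by
  rw [Nat.choose_two_right, ← sum_range_id, ← sum_range_reflect]
  exact sum_congr rfl fun k hk => by rw [mem_range] at hk; omega

theorem Finset.sum_range_natAbs_sub_eq_choose_two (n : ℕ) :
    ∑ j ∈ range n, ((j : ℤ) - n).natAbs = (n + 1).choose 2 := by
  rw [← sum_range_sub_succ_eq_choose_two, sum_range_succ, Nat.sub_self, add_zero]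
  exact sum_congr rfl fun k hk => by rw [mem_range] at hk; omega

theorem Finset.sum_range_sum_range_natAbs_sub_eq_two_mul_choose_three (n : ℕ) :
    ∑ i ∈ range n, ∑ j ∈ range n, ((i : ℤ) - j).natAbs = 2 * (n + 1).choose 3 := by
  induction n with
  | zero => simp [Nat.choose_eq_zero_of_lt]
  | succ n ih =>
    have hsymm :
        ∑ j ∈ range n, ((n : ℤ) - j).natAbs = ∑ j ∈ range n, ((j : ℤ) - n).natAbs :=
      sum_congr rfl fun j _ => by omega
    simp only [sum_range_succ, sum_add_distrib, ih, hsymm, sum_range_natAbs_sub_eq_choose_two,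
      sub_self, Int.natAbs_zero, Nat.choose_succ_succ (n + 1) 2]
    ring

theorem Fintype.card_compl_singleton_add_one {V : Type*} [Fintype V] [DecidableEq V] (v : V) :
    Fintype.card ({v}ᶜ : Set V) + 1 = Fintype.card V := by
  rw [Fintype.card_compl_set, Set.card_singleton]
  have := Fintype.card_pos_iff.mpr ⟨v⟩
  omega

namespace SimpleGraph

variable {V W : Type*} {G : SimpleGraph V} {u v : V}

theorem Reachable.dist_map_le {H : SimpleGraph W} (f : G →g H) (h : G.Reachable u v) :
    H.dist (f u) (f v) ≤ G.dist u v := by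
  obtain ⟨p, hp⟩ := h.exists_walk_length_eq_dist
  rw [← hp, ← p.length_map f]
  exact dist_le _

theorem Walk.dist_getVert_of_length_eq_dist (p : G.Walk u v) (hp : p.length = G.dist u v)
    {i : ℕ} (hi : i ≤ p.length) : G.dist u (p.getVert i) = i := by
  rw [← length_eq_dist_of_subwalk hp (p.isSubwalk_take i), Walk.take_length]
  omega

theorem Connected.dist_lt_card [Fintype V] (hG : G.Connected) (u v : V) :
    G.dist u v < Fintype.card V := by
  obtain ⟨p, hp, hpl⟩ := hG.exists_path_of_dist u v
  exact hpl ▸ hp.length_lt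

theorem Connected.card_filter_lt_dist_le [Fintype V] (hG : G.Connected) (v : V) (k : ℕ) :
    #{u | k < G.dist v u} ≤ Fintype.card V - (k + 1) := by
  classical
  obtain ⟨u, hu⟩ | hempty := ({u | k < G.dist v u} : Finset V).eq_empty_or_nonempty.symm
  · rw [mem_filter] at hu
    obtain ⟨p, -, hpl⟩ := hG.exists_path_of_dist v u
    have hdist (i : ℕ) (hi : i ≤ k) : G.dist v (p.getVert i) = i :=
      p.dist_getVert_of_length_eq_dist hpl (by omega)
    have hnear : #(image p.getVert (range (k + 1))) = k + 1 := by
      rw [card_image_of_injOn, card_range]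
      intro i hi j hj hij
      simp only [coe_range, Set.mem_Iio] at hi hj
      rw [← hdist i (by omega), ← hdist j (by omega), hij]
    have hdisj : Disjoint (image p.getVert (range (k + 1))) ({u | k < G.dist v u} : Finset V) := by
      refine Finset.disjoint_left.mpr fun w hw => ?_
      obtain ⟨i, hi, rfl⟩ := mem_image.mp hw
      rw [mem_range] at hi
      simp only [mem_filter, mem_univ, true_and, not_lt]
      rw [hdist i (by omega)]
      omega
    have := card_union_of_disjoint hdisj ▸ card_le_univ (image p.getVert (range (k + 1)) ∪ _)
    omega
  · simp [hempty]

section Fintype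

variable [Fintype V]

theorem Connected.sum_dist_le_choose_two (hG : G.Connected) (v : V) :
    ∑ u, G.dist v u ≤ (Fintype.card V).choose 2 := by
  rw [sum_eq_sum_range_card_filter_lt univ _ fun u _ => (hG.dist_lt_card v u).le,
    ← sum_range_sub_succ_eq_choose_two]
  exact sum_le_sum fun k _ => hG.card_filter_lt_dist_le v k

theorem Connected.sum_dist_lt_choose_two (hG : G.Connected) (v : V)
    (h : ∀ u, G.dist v u + 1 < Fintype.card V) :
    ∑ u, G.dist v u < (Fintype.card V).choose 2 := by
  have hcard := h v
  rw [sum_eq_sum_range_card_filter_lt univ _ fun u _ => (hG.dist_lt_card v u).le,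
    ← sum_range_sub_succ_eq_choose_two]
  refine sum_lt_sum (fun k _ => hG.card_filter_lt_dist_le v k)
    ⟨Fintype.card V - 2, mem_range.mpr (by omega), ?_⟩
  rw [card_eq_zero.mpr (filter_eq_empty_iff.mpr fun u _ => by have := h u; omega)]
  omega

theorem Connected.nonempty_iso_pathGraph (hG : G.Connected)
    (h : G.dist v u + 1 = Fintype.card V) :
    Nonempty (G ≃g pathGraph (Fintype.card V)) := by
  obtain ⟨p, -, hpl⟩ := hG.exists_path_of_dist v u
  have hdist (i : Fin (Fintype.card V)) : G.dist v (p.getVert i) = i :=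
    p.dist_getVert_of_length_eq_dist hpl (by omega)
  have hinj : Function.Injective fun i : Fin (Fintype.card V) => p.getVert i := fun i j hij =>
    Fin.ext (by simpa only [hdist] using congrArg (G.dist v) hij)
  let e := Equiv.ofBijective _ ((Fintype.bijective_iff_injective_and_card _).mpr
    ⟨hinj, Fintype.card_fin _⟩)
  refine ⟨RelIso.symm ⟨e, fun {i j} => ?_⟩⟩
  rw [pathGraph_adj]
  constructor
  · intro hadj
    have hij : i ≠ j := fun hij => hadj.ne (congrArg e hij)
    have := hadj.diff_dist_adj (u := v)
    simp only [e, Equiv.ofBijective_apply, hdist] at this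
    omega
  · rintro (hij | hij)
    · simpa only [e, Equiv.ofBijective_apply, ← hij] using p.adj_getVert_succ (by omega)
    · simpa only [e, Equiv.ofBijective_apply, ← hij] using (p.adj_getVert_succ (by omega)).symm

theorem sum_sum_dist_le_induce_compl_singleton [DecidableEq V] (v : V)
    (hH : (G.induce {v}ᶜ).Preconnected) :
    ∑ i, ∑ j, G.dist i j ≤
      ∑ i : ({v}ᶜ : Set V), ∑ j : ({v}ᶜ : Set V), (G.induce {v}ᶜ).dist i j +
        2 * ∑ u, G.dist v u := by
  have hcompl (f : V → ℕ) : ∑ u ∈ {v}ᶜ, f u = ∑ u : ({v}ᶜ : Set V), f u :=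
    sum_subtype _ (by simp) f
  have hinduce : ∑ i ∈ {v}ᶜ, ∑ j ∈ {v}ᶜ, G.dist i j ≤
      ∑ i : ({v}ᶜ : Set V), ∑ j : ({v}ᶜ : Set V), (G.induce {v}ᶜ).dist i j := by
    simp only [hcompl]
    exact sum_le_sum fun i _ => sum_le_sum fun j _ =>
      (hH i j).dist_map_le (Embedding.induce _).toHom
  have hcol : ∑ i ∈ {v}ᶜ, G.dist i v = ∑ u ∈ {v}ᶜ, G.dist v u :=
    sum_congr rfl fun _ _ => dist_comm
  simp only [Fintype.sum_eq_add_sum_compl v (G.dist _ ·)]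
  rw [Fintype.sum_eq_add_sum_compl v, sum_add_distrib, hcol]
  omega

theorem Connected.sum_sum_dist_le (hG : G.Connected) :
    ∑ i, ∑ j, G.dist i j ≤ 2 * (Fintype.card V + 1).choose 3 := by
  induction h : Fintype.card V generalizing V with
  | zero =>
    have := hG.nonempty
    exact absurd h Fintype.card_ne_zero
  | succ n ih =>
    classical
    rcases subsingleton_or_nontrivial V with hV | hV
    · have hzero (i j : V) : G.dist i j = 0 := by rw [Subsingleton.elim i j, dist_self]
      simp [hzero]
    obtain ⟨v, hv⟩ := hG.exists_connected_induce_compl_singleton_of_finite_nontrivial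
    have hcard : Fintype.card ({v}ᶜ : Set V) = n := by
      have := Fintype.card_compl_singleton_add_one v
      omega
    calc ∑ i, ∑ j, G.dist i j ≤ _ := sum_sum_dist_le_induce_compl_singleton v hv.preconnected
      _ ≤ 2 * (n + 1).choose 3 + 2 * (n + 1).choose 2 := by
        gcongr
        · exact ih hv hcard
        · exact h ▸ hG.sum_dist_le_choose_two v
      _ = 2 * (n + 1 + 1).choose 3 := by rw [Nat.choose_succ_succ (n + 1) 2]; ring

theorem Connected.sum_sum_dist_lt (hG : G.Connected) [Nontrivial V]
    (h : ¬Nonempty (G ≃g pathGraph (Fintype.card V))) :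
    ∑ i, ∑ j, G.dist i j < 2 * (Fintype.card V + 1).choose 3 := by
  classical
  obtain ⟨v, hv⟩ := hG.exists_connected_induce_compl_singleton_of_finite_nontrivial
  have hfar (u : V) : G.dist v u + 1 < Fintype.card V :=
    lt_of_le_of_ne (hG.dist_lt_card v u) fun he => h (hG.nonempty_iso_pathGraph he)
  calc ∑ i, ∑ j, G.dist i j ≤ _ := sum_sum_dist_le_induce_compl_singleton v hv.preconnected
    _ < 2 * (Fintype.card V).choose 3 + 2 * (Fintype.card V).choose 2 := by
      have hrest := hv.sum_sum_dist_le
      rw [Fintype.card_compl_singleton_add_one v] at hrest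
      have hv_lt := hG.sum_dist_lt_choose_two v hfar
      omega
    _ = 2 * (Fintype.card V + 1).choose 3 := by rw [Nat.choose_succ_succ _ 2]; ring

end Fintype

theorem pathGraph_natAbs_sub_le_dist {n : ℕ} (i j : Fin n) :
    ((i : ℤ) - j).natAbs ≤ (pathGraph n).dist i j := by
  obtain ⟨p, hp⟩ := (pathGraph_preconnected n i j).exists_walk_length_eq_dist
  rw [← hp]
  clear hp
  induction p with
  | nil => simp
  | cons h _ ih =>
    rw [pathGraph_adj] at h
    rw [Walk.length_cons]
    omega

theorem two_mul_choose_three_le_sum_sum_dist_pathGraph (n : ℕ) :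
    2 * (n + 1).choose 3 ≤ ∑ i, ∑ j, (pathGraph n).dist i j := by
  rw [← sum_range_sum_range_natAbs_sub_eq_two_mul_choose_three]
  simp only [← Fin.sum_univ_eq_sum_range]
  gcongr with i _ j _
  exact pathGraph_natAbs_sub_le_dist i j

end SimpleGraph

theorem stmt10 {V : Type*} [Fintype V] {N : ℕ} (hN : 2 ≤ N)
    (T : SimpleGraph V) (hcard : Fintype.card V = N) (hT : T.IsTree)
    (hnp : ¬ Nonempty (T ≃g SimpleGraph.pathGraph N)) :
    wiener T < wiener (SimpleGraph.pathGraph N) := by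
  subst hcard
  have : Nontrivial V := Fintype.one_lt_card_iff_nontrivial.mp hN
  have hT_lt := hT.connected.sum_sum_dist_lt hnp
  have hpath := SimpleGraph.two_mul_choose_three_le_sum_sum_dist_pathGraph (Fintype.card V)
  unfold wiener
  omega
end
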